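/- Suppose the trajectories (s_t) and (s'_t) generated from initial states s_0, s'_0 satisfy ‖s'_t - s_t‖ ≤ K₁ δ e^{λt} for all t, where δ = ‖s'_0 - s_0‖, and the per-step cost c : S → ℝ satisfies both a Lipschitz bound |c(s) - c(s')| ≤ K₂‖s - s'‖ and a uniform bound |c(s)| ≤ M₂ on S. If λ > -log γ with γ ∈ (0,1), then |Σ_{t=0}^∞ γ^t c(s'_t) - Σ_{t=0}^∞ γ^t c(s_t)| ≤ C δ^{(-log γ)/λ} for some constant C depending only on K₁, K₂, M₂, γ, λ (and not on δ), for all sufficiently small δ > 0. That is, the value function is ((-log γ)/λ)-Hölder continuous in the initial state. -/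

import Mathlib

/-!
Write `d t = c (s' t) - c (s t)`. The Lipschitz bound and exponential divergence give
`|d t| ≤ K₁ K₂ δ e^{λ t}`, while the uniform bound gives `|d t| ≤ 2 M₂`. Splitting the discounted
series at `T = ⌈-log δ / λ⌉`, the head is a geometric sum of ratio `γ e^λ > 1`, hence of size
`δ (γ e^λ)^T ≲ γ^T`, and the tail is of size `γ^T`; both are `O(δ^{-log γ / λ})` since
`γ^T = e^{T log γ} ≤ δ^{-log γ / λ}`.
-/

open Set Finset Real

lemma summable_pow_mul_of_abs_le {γ M : ℝ} {f : ℕ → ℝ} (hγ0 : 0 ≤ γ) (hγ1 : γ < 1)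
    (hf : ∀ t, |f t| ≤ M) : Summable fun t => γ ^ t * f t :=
  .of_norm_bounded ((summable_geometric_of_lt_one hγ0 hγ1).mul_left M) fun t => by
    rw [norm_mul, norm_pow, norm_of_nonneg hγ0, norm_eq_abs, mul_comm]
    exact mul_le_mul_of_nonneg_right (hf t) (by positivity)

lemma sum_range_pow_le_pow_div_sub_one {r : ℝ} (hr : 1 < r) (T : ℕ) :
    ∑ i ∈ range T, r ^ i ≤ r ^ T / (r - 1) := by
  rw [geom_sum_eq hr.ne']
  gcongr
  linarith

theorem abs_tsum_pow_mul_le_of_abs_le {γ q A B : ℝ} {d : ℕ → ℝ} (hγ0 : 0 ≤ γ) (hγ1 : γ < 1)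
    (hγq : 1 < γ * q) (hdA : ∀ t, |d t| ≤ A * q ^ t) (hdB : ∀ t, |d t| ≤ B) (T : ℕ) :
    |∑' t, γ ^ t * d t| ≤ A * (γ * q) ^ T / (γ * q - 1) + B * γ ^ T / (1 - γ) := by
  have hA : 0 ≤ A := by simpa using (abs_nonneg _).trans (hdA 0)
  have habs : ∀ t, |γ ^ t * d t| = γ ^ t * |d t| := fun t => by
    rw [abs_mul, abs_of_nonneg (pow_nonneg hγ0 t)]
  have hsum : Summable fun t => |γ ^ t * d t| :=
    (summable_pow_mul_of_abs_le hγ0 hγ1 (f := fun t => |d t|) (M := B)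
      fun t => (abs_abs (d t)).le.trans (hdB t)).congr fun t => (habs t).symm
  have hhead : ∑ t ∈ range T, |γ ^ t * d t| ≤ A * (γ * q) ^ T / (γ * q - 1) :=
    calc ∑ t ∈ range T, |γ ^ t * d t|
        ≤ ∑ t ∈ range T, A * (γ * q) ^ t := sum_le_sum fun t _ => by
          rw [habs, mul_pow, mul_left_comm]
          exact mul_le_mul_of_nonneg_left (hdA t) (pow_nonneg hγ0 t)
      _ ≤ A * ((γ * q) ^ T / (γ * q - 1)) := by
          rw [← mul_sum]
          exact mul_le_mul_of_nonneg_left (sum_range_pow_le_pow_div_sub_one hγq T) hA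
      _ = A * (γ * q) ^ T / (γ * q - 1) := by ring
  have htail : ∑' t, |γ ^ (t + T) * d (t + T)| ≤ B * γ ^ T / (1 - γ) :=
    calc ∑' t, |γ ^ (t + T) * d (t + T)|
        ≤ ∑' t, B * γ ^ T * γ ^ t :=
          ((summable_nat_add_iff T).mpr hsum).tsum_le_tsum (fun t => (habs _).trans_le <|
            (mul_le_mul_of_nonneg_left (hdB _) (by positivity)).trans_eq (by ring))
            ((summable_geometric_of_lt_one hγ0 hγ1).mul_left _)
      _ = B * γ ^ T / (1 - γ) := by
          rw [tsum_mul_left, tsum_geometric_of_lt_one hγ0 hγ1, div_eq_mul_inv]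
  calc |∑' t, γ ^ t * d t| ≤ ∑' t, |γ ^ t * d t| := by
        simpa only [norm_eq_abs] using
          norm_tsum_le_tsum_norm (f := fun t => γ ^ t * d t) (by simpa only [norm_eq_abs] using hsum)
    _ = ∑ t ∈ range T, |γ ^ t * d t| + ∑' t, |γ ^ (t + T) * d (t + T)| :=
        (hsum.sum_add_tsum_nat_add T).symm
    _ ≤ _ := add_le_add hhead htail

section Horizon

variable {γ δ lam : ℝ} {T : ℕ}

lemma pow_le_rpow_of_neg_log_div_le (hγ0 : 0 < γ) (hγ1 : γ ≤ 1) (hδ : 0 < δ)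
    (hT : -log δ / lam ≤ T) : γ ^ T ≤ δ ^ (-log γ / lam) := by
  rw [← exp_log (pow_pos hγ0 T), rpow_def_of_pos hδ, exp_le_exp, log_pow]
  calc (T : ℝ) * log γ ≤ -log δ / lam * log γ :=
        mul_le_mul_of_nonpos_right hT (log_nonpos hγ0.le hγ1)
    _ = log δ * (-log γ / lam) := by ring

lemma mul_exp_mul_le_exp (hδ : 0 < δ) (hlam : 0 < lam) (hT : (T : ℝ) ≤ -log δ / lam + 1) :
    δ * exp (lam * T) ≤ exp lam := by
  rw [← exp_log hδ, ← exp_add, exp_le_exp]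
  have := mul_le_mul_of_nonneg_left hT hlam.le
  rw [mul_add, mul_div_cancel₀ _ hlam.ne', mul_one] at this
  linarith

lemma split_bound_at_log_horizon_le {A B : ℝ} (hγ0 : 0 < γ) (hγ1 : γ < 1)
    (hγe : 1 < γ * exp lam) (hlam : 0 < lam) (hA : 0 ≤ A) (hB : 0 ≤ B) (hδ0 : 0 < δ) (hδ1 : δ < 1) :
    A * δ * (γ * exp lam) ^ ⌈-log δ / lam⌉₊ / (γ * exp lam - 1)
        + B * γ ^ ⌈-log δ / lam⌉₊ / (1 - γ) ≤
      (A * exp lam / (γ * exp lam - 1) + B / (1 - γ)) * δ ^ (-log γ / lam) := by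
  set T := ⌈-log δ / lam⌉₊
  have hx : 0 ≤ -log δ / lam := div_nonneg (neg_nonneg.mpr (log_nonpos hδ0.le hδ1.le)) hlam.le
  have hγT : γ ^ T ≤ δ ^ (-log γ / lam) := pow_le_rpow_of_neg_log_div_le hγ0 hγ1.le hδ0 (Nat.le_ceil _)
  have hδT : δ * exp (lam * T) ≤ exp lam := mul_exp_mul_le_exp hδ0 hlam (Nat.ceil_lt_add_one hx).le
  have := sub_pos.mpr hγe
  have := sub_pos.mpr hγ1
  calc A * δ * (γ * exp lam) ^ T / (γ * exp lam - 1) + B * γ ^ T / (1 - γ)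
      = A * (δ * exp (lam * T)) * γ ^ T / (γ * exp lam - 1) + B * γ ^ T / (1 - γ) := by
        rw [mul_pow, ← exp_nat_mul, mul_comm (T : ℝ)]; ring
    _ ≤ A * exp lam * δ ^ (-log γ / lam) / (γ * exp lam - 1)
          + B * δ ^ (-log γ / lam) / (1 - γ) := by gcongr
    _ = _ := by ring

end Horizon

theorem stmt2 (n : ℕ) (γ lam K₁ K₂ M₂ : ℝ) (hγ : γ ∈ Ioo (0 : ℝ) 1)
    (hlam : -Real.log γ < lam) (hK₁ : 0 < K₁) (hK₂ : 0 < K₂) (hM₂ : 0 < M₂)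
    (c : EuclideanSpace ℝ (Fin n) → ℝ)
    (hLip : ∀ x y, |c x - c y| ≤ K₂ * ‖x - y‖)
    (hBdd : ∀ x, |c x| ≤ M₂) :
    ∃ C > 0, ∃ δ₀ > 0, ∀ s s' : ℕ → EuclideanSpace ℝ (Fin n),
      0 < ‖s' 0 - s 0‖ → ‖s' 0 - s 0‖ < δ₀ →
      (∀ t : ℕ, ‖s' t - s t‖ ≤ K₁ * ‖s' 0 - s 0‖ * Real.exp (lam * t)) →
      |(∑' t : ℕ, γ ^ t * c (s' t)) - ∑' t : ℕ, γ ^ t * c (s t)| ≤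
        C * ‖s' 0 - s 0‖ ^ ((-Real.log γ) / lam) := by
  obtain ⟨hγ0, hγ1⟩ := hγ
  have hγe : 1 < γ * exp lam := by
    rw [← exp_log hγ0, ← exp_add, one_lt_exp_iff]
    linarith
  have hlam0 : 0 < lam := (neg_pos.mpr (log_neg hγ0 hγ1)).trans hlam
  have := sub_pos.mpr hγe
  have := sub_pos.mpr hγ1
  refine ⟨K₁ * K₂ * exp lam / (γ * exp lam - 1) + 2 * M₂ / (1 - γ), by positivity, 1, one_pos, ?_⟩
  intro s s' hδ0 hδ1 htraj
  set δ := ‖s' 0 - s 0‖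
  rw [← (summable_pow_mul_of_abs_le hγ0.le hγ1 fun t => hBdd (s' t)).tsum_sub
    (summable_pow_mul_of_abs_le hγ0.le hγ1 fun t => hBdd (s t))]
  simp_rw [← mul_sub]
  refine (abs_tsum_pow_mul_le_of_abs_le (A := K₁ * K₂ * δ) (B := 2 * M₂) hγ0.le hγ1 hγe
    (fun t => ?_) (fun t => ?_) ⌈-log δ / lam⌉₊).trans
    (split_bound_at_log_horizon_le hγ0 hγ1 hγe hlam0 (by positivity) (by positivity) hδ0 hδ1)
  · calc |c (s' t) - c (s t)| ≤ K₂ * (K₁ * δ * exp (lam * t)) :=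
          (hLip _ _).trans (mul_le_mul_of_nonneg_left (htraj t) hK₂.le)
      _ = K₁ * K₂ * δ * exp lam ^ t := by rw [← exp_nat_mul, mul_comm lam]; ring
  · calc |c (s' t) - c (s t)| ≤ |c (s' t)| + |c (s t)| := abs_sub _ _
      _ ≤ 2 * M₂ := by linarith [hBdd (s' t), hBdd (s t)]
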